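/- arXiv:2510.08310 — 6 statements merged into one kernel-verified Lean document; each statement's English description precedes it below -/
import Mathlib

section
/- In the prism graph C_n □ K_2 (n ≥ 3), every hamiltonian cycle contains either exactly 2 pillar edges or all n pillar edges. -/
open SimpleGraph

/-- Vertex type of the `n`-prism `C_n □ K_2`: the base cycle consists of the
vertices `(i, false)` (the `sᵢ`) and the top cycle of the vertices `(i, true)` (the `tᵢ`). -/
abbrev PV (n : ℕ) := ZMod n × Bool

/-- The prism graph `C_n □ K_2`. -/
def prismG (n : ℕ) : SimpleGraph (PV n) :=
  SimpleGraph.fromRel fun u v =>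
    (u.1 = v.1 ∧ u.2 ≠ v.2) ∨ (u.2 = v.2 ∧ v.1 = u.1 + 1)

/-- The pillar edge `sᵢtᵢ`. -/
def pillar (n : ℕ) (i : ZMod n) : Sym2 (PV n) :=
  s(((i, false) : PV n), ((i, true) : PV n))

/-- The base-cycle edge `sᵢs_{i+1}`. -/
def baseEdge (n : ℕ) (i : ZMod n) : Sym2 (PV n) :=
  s(((i, false) : PV n), ((i + 1, false) : PV n))

/-- The top-cycle edge `tᵢt_{i+1}`. -/
def topEdge (n : ℕ) (i : ZMod n) : Sym2 (PV n) :=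
  s(((i, true) : PV n), ((i + 1, true) : PV n))

def IsPillar {n : ℕ} (e : Sym2 (PV n)) : Prop := ∃ i, e = pillar n i
def IsBaseEdge {n : ℕ} (e : Sym2 (PV n)) : Prop := ∃ i, e = baseEdge n i
def IsTopEdge {n : ℕ} (e : Sym2 (PV n)) : Prop := ∃ i, e = topEdge n i

/-- A hamiltonian cycle of the prism is *meandering* if no two of its edges lying on the
top cycle or on the base cycle are adjacent (share a vertex; in a cycle, edges sharing a
vertex are exactly the consecutive ones). -/
def Meandering {n : ℕ} {v : PV n} (C : (prismG n).Walk v v) : Prop :=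
  ∀ e ∈ C.edges, ∀ f ∈ C.edges, e ≠ f →
    ((IsBaseEdge e ∧ IsBaseEdge f) ∨ (IsTopEdge e ∧ IsTopEdge f)) → ¬ ∃ x, x ∈ e ∧ x ∈ f

/-- Explicit edge list of the Tutte Fragment on 15 vertices, following Tutte (1946):
`0 = a`, `1 = b` (the two bottom corner 2-valent vertices), `2 = c` (the apex 2-valent
vertex); `3, …, 14` are the internal 3-valent vertices `p₁, …, p₁₂`. -/
def TFedges : List (Fin 15 × Fin 15) :=
  [(0,4),(4,5),(5,6),(6,2),(1,7),(7,8),(8,2),(0,14),(14,1),(4,9),(9,3),(3,10),(10,7),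
   (5,11),(11,12),(6,13),(13,8),(13,12),(12,10),(11,9),(3,14)]

/-- The Tutte Fragment as a simple graph on `Fin 15`. -/
def TF : SimpleGraph (Fin 15) :=
  SimpleGraph.fromRel fun x y => (x, y) ∈ TFedges

/-- The attachment port of the prism vertex `u` used for the former prism edge towards the
neighbour `w`, after the TF-inflations prescribed by the set `S` of inflated vertices and the
orientation choice `orient`.  A non-inflated vertex keeps its single representative (port `0`);
for an inflated vertex the vertex `c = 2` of its Tutte Fragment is incident with the pillar,
and the vertices `a = 0`, `b = 1` are attached to the two cycle neighbours according to
`orient u`. -/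
def port {n : ℕ} (S : Finset (PV n)) (orient : PV n → Bool) (u w : PV n) : Fin 15 :=
  if u ∉ S then 0
  else if u.1 = w.1 then 2
  else if w.1 = u.1 + 1 then (if orient u then 0 else 1)
  else (if orient u then 1 else 0)

/-- Vertex type of the TF-inflated prism: an inflated prism vertex `v ∈ S` is replaced by the
15 vertices `(v, k)` of a fresh copy of the Tutte Fragment, while a non-inflated vertex `v`
is represented by `(v, 0)` alone. -/
def InflV (n : ℕ) (S : Finset (PV n)) := {x : PV n × Fin 15 // x.1 ∈ S ∨ x.2 = 0}

/-- The graph obtained from the prism `C_n □ K_2` by TF-inflating every vertex in `S`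
(with orientations `orient`, and with the `c`-vertex of each fragment incident to the
corresponding pillar). -/
def inflPrism (n : ℕ) (S : Finset (PV n)) (orient : PV n → Bool) :
    SimpleGraph (InflV n S) :=
  SimpleGraph.fromRel fun x y =>
    (x.val.1 = y.val.1 ∧ x.val.1 ∈ S ∧ TF.Adj x.val.2 y.val.2) ∨
    (x.val.1 ≠ y.val.1 ∧ (prismG n).Adj x.val.1 y.val.1 ∧
      x.val.2 = port S orient x.val.1 y.val.1 ∧
      y.val.2 = port S orient y.val.1 x.val.1)

/-- The vertex of the inflated prism representing the attachment port of the prism vertex `u`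
towards its prism neighbour `w`. -/
def liftV {n : ℕ} (S : Finset (PV n)) (orient : PV n → Bool) (u w : PV n) :
    InflV n S :=
  ⟨(u, port S orient u w), by
    by_cases h : u ∈ S
    · exact Or.inl h
    · exact Or.inr (by simp [port, h])⟩

/-- The set of (indices of) pillars of the prism carrying at least one TF-inflated vertex. -/
def inflatedPillars {n : ℕ} (S : Finset (PV n)) : Set (ZMod n) :=
  {i : ZMod n | ((i, false) : PV n) ∈ S ∨ ((i, true) : PV n) ∈ S}

instance (n : ℕ) (S : Finset (PV n)) : DecidableEq (InflV n S) := by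
  unfold InflV; infer_instance

/-!
A hamiltonian cycle uses exactly two of the three edges at every vertex `(i, c)`, so pillar `i`
is used iff the row `c` changes between its edges `i - 1` and `i`. As this holds for both rows,
whether the base edge `i` and the top edge `i` are both used or both unused does not depend
on `i`. If they always agree, the cycle misses the two row edges at exactly one index `j`:
missing none leaves no pillar, missing two cuts the prism into two arcs. The pillars used
are then `j` and `j + 1`. If they always disagree, an unused pillar would leave one of its
endpoints incident with fewer than two edges of the cycle.
-/

namespace SimpleGraph.Walk

variable {V : Type*} {G : SimpleGraph V}

theorem IsCycle.exists_mem_edges_iff {u x : V} {C : G.Walk u u} (hC : C.IsCycle)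
    (hx : x ∈ C.support) : ∃ a b, a ≠ b ∧ ∀ y, s(x, y) ∈ C.edges ↔ y = a ∨ y = b := by
  obtain ⟨a, b, hab, h⟩ := Set.ncard_eq_two.mp (hC.ncard_neighborSet_toSubgraph_eq_two hx)
  refine ⟨a, b, hab, fun y => ?_⟩
  rw [← C.mem_edges_toSubgraph, Subgraph.mem_edgeSet, ← Subgraph.mem_neighborSet, h]
  rfl

theorem iff_of_mem_support {u w : V} {p : G.Walk u w} (P : V → Prop)
    (hP : ∀ x y, s(x, y) ∈ p.edges → (P x ↔ P y)) {x : V} (hx : x ∈ p.support) :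
    P x ↔ P u := by
  induction p with
  | nil => rw [support_nil, List.mem_singleton] at hx; rw [hx]
  | cons h p ih =>
    rw [support_cons, List.mem_cons] at hx
    rcases hx with rfl | hx
    · rfl
    · rw [ih (fun x y hxy => hP x y (List.mem_cons_of_mem _ hxy)) hx]
      exact (hP _ _ List.mem_cons_self).symm

end SimpleGraph.Walk

namespace ZMod

variable {n : ℕ} [NeZero n]

theorem iff_zero_of_forall_add_one_iff (P : ZMod n → Prop) (hP : ∀ i, P (i + 1) ↔ P i)
    (i : ZMod n) : P i ↔ P 0 := by
  rw [← natCast_zmod_val i]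
  induction i.val with
  | zero => rw [Nat.cast_zero]
  | succ m ih => rw [Nat.cast_succ, hP, ih]

theorem val_sub_one_lt_iff {t e : ZMod n} (ht : t ≠ 0) (hte : t ≠ e) :
    (t - 1).val < e.val ↔ t.val < e.val := by
  have hn : n ≠ 1 := by
    rintro rfl
    exact ht (Subsingleton.elim _ _)
  have hone : (1 : ZMod n).val = 1 := val_one'' hn
  have ht0 : t.val ≠ 0 := (val_eq_zero t).not.mpr ht
  have hte' : t.val ≠ e.val := (val_injective n).ne hte
  rw [val_sub (by omega), hone]
  omega

end ZMod

def rowEdge (n : ℕ) (c : Bool) (i : ZMod n) : Sym2 (PV n) :=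
  s(((i, c) : PV n), ((i + 1, c) : PV n))

section Prism

variable {n : ℕ}

theorem prismG_adj_cases {i : ZMod n} {c : Bool} {y : PV n} (h : (prismG n).Adj (i, c) y) :
    y = (i - 1, c) ∨ y = (i + 1, c) ∨ y = (i, !c) := by
  obtain ⟨j, d⟩ := y
  simp only [prismG, fromRel_adj, Prod.mk.injEq] at h ⊢
  obtain ⟨-, h⟩ := h
  rcases h with (⟨rfl, hd⟩ | ⟨rfl, rfl⟩) | (⟨rfl, hd⟩ | ⟨rfl, rfl⟩)
  · cases c <;> cases d <;> simp_all
  · simp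
  · cases c <;> cases d <;> simp_all
  · simp

theorem prism_neighbors_ne (hn : 3 ≤ n) (i : ZMod n) (c : Bool) :
    ((i - 1, c) : PV n) ≠ (i + 1, c) ∧ ((i - 1, c) : PV n) ≠ (i, !c) ∧
      ((i + 1, c) : PV n) ≠ (i, !c) := by
  have h2 : (2 : ZMod n) ≠ 0 := by
    rw [← Nat.cast_ofNat, Ne, ZMod.natCast_eq_zero_iff]
    exact Nat.not_dvd_of_pos_of_lt two_pos hn
  refine ⟨fun h => h2 ?_, by simp, by simp⟩
  rw [Prod.mk.injEq] at h
  linear_combination -h.1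

theorem sym2_mk_sub_one_eq_rowEdge (i : ZMod n) (c : Bool) :
    s(((i, c) : PV n), ((i - 1, c) : PV n)) = rowEdge n c (i - 1) := by
  rw [rowEdge, Sym2.eq_swap, sub_add_cancel]

theorem sym2_mk_add_one_eq_rowEdge (i : ZMod n) (c : Bool) :
    s(((i, c) : PV n), ((i + 1, c) : PV n)) = rowEdge n c i := rfl

theorem sym2_mk_not_eq_pillar (i : ZMod n) (c : Bool) :
    s(((i, c) : PV n), ((i, !c) : PV n)) = pillar n i := by
  cases c
  · rfl
  · exact Sym2.eq_swap

end Prism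

section HamiltonianCycle

variable {n : ℕ} {v : PV n} {C : (prismG n).Walk v v}

theorem cycle_edges_at_prism_vertex (hn : 3 ≤ n) (hC : C.IsCycle) {i : ZMod n} {c : Bool}
    (hx : ((i, c) : PV n) ∈ C.support) :
    (pillar n i ∈ C.edges ↔ ¬(rowEdge n c (i - 1) ∈ C.edges ↔ rowEdge n c i ∈ C.edges)) ∧
      (rowEdge n c (i - 1) ∈ C.edges ∨ rowEdge n c i ∈ C.edges) := by
  obtain ⟨a, b, hab, h⟩ := hC.exists_mem_edges_iff hx
  have hl := h (i - 1, c)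
  have hr := h (i + 1, c)
  have hu := h (i, !c)
  rw [sym2_mk_sub_one_eq_rowEdge] at hl
  rw [sym2_mk_add_one_eq_rowEdge] at hr
  rw [sym2_mk_not_eq_pillar] at hu
  rw [hl, hr, hu]
  obtain ⟨h12, h13, h23⟩ := prism_neighbors_ne hn i c
  have ha := prismG_adj_cases (C.adj_of_mem_edges ((h a).mpr (Or.inl rfl)))
  have hb := prismG_adj_cases (C.adj_of_mem_edges ((h b).mpr (Or.inr rfl)))
  rcases ha with rfl | rfl | rfl <;> rcases hb with rfl | rfl | rfl <;>
    simp [h12, h13, h23, h12.symm, h13.symm, h23.symm] at hab ⊢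

theorem iff_of_prism_edges (hC : C.IsHamiltonianCycle) (P : PV n → Prop)
    (hrow : ∀ c i, rowEdge n c i ∈ C.edges → (P (i, c) ↔ P (i + 1, c)))
    (hpillar : ∀ i, pillar n i ∈ C.edges → (P (i, false) ↔ P (i, true))) (x : PV n) :
    P x ↔ P v := by
  refine Walk.iff_of_mem_support P (fun x y hxy => ?_) (hC.mem_support x)
  obtain ⟨i, c⟩ := x
  rcases prismG_adj_cases (C.adj_of_mem_edges hxy) with rfl | rfl | rfl
  · rw [sym2_mk_sub_one_eq_rowEdge] at hxy
    simpa using (hrow c _ hxy).symm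
  · exact hrow c i hxy
  · rw [sym2_mk_not_eq_pillar] at hxy
    cases c
    · exact hpillar i hxy
    · exact (hpillar i hxy).symm

theorem exists_pillar_mem_edges (hC : C.IsHamiltonianCycle) :
    ∃ i, pillar n i ∈ C.edges := by
  by_contra! h
  have := iff_of_prism_edges hC (fun x => x.2 = true) (fun _ _ _ => Iff.rfl)
    (fun i hi => absurd hi (h i))
  simpa using (this (0, false)).trans (this (0, true)).symm

theorem eq_of_rowEdge_not_mem_edges [NeZero n] (hC : C.IsHamiltonianCycle)
    {j k : ZMod n} (hj : ∀ c, rowEdge n c j ∉ C.edges) (hk : ∀ c, rowEdge n c k ∉ C.edges) :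
    j = k := by
  by_contra hjk
  -- `arc x` says `x.1 ∈ {j + 1, …, k}`; no row edge of `C` leaves or enters this arc
  let arc : PV n → Prop := fun x => (x.1 - j - 1).val < (k - j).val
  have hstep : ∀ c m, rowEdge n c m ∈ C.edges → (arc (m, c) ↔ arc (m + 1, c)) := by
    intro c m hm
    have hmj : m - j ≠ 0 := sub_ne_zero.mpr fun h => hj c (h ▸ hm)
    have hmk : m - j ≠ k - j := fun h => hk c (sub_left_injective h ▸ hm)
    change _ ↔ (m + 1 - j - 1).val < _
    rw [show m + 1 - j - 1 = m - j by ring]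
    exact ZMod.val_sub_one_lt_iff hmj hmk
  have := iff_of_prism_edges hC arc hstep (fun _ _ => Iff.rfl)
  have hin : arc (j + 1, false) := by
    simp only [arc, add_sub_cancel_left, sub_self, ZMod.val_zero]
    exact Nat.pos_of_ne_zero ((ZMod.val_eq_zero _).not.mpr (sub_ne_zero.mpr (Ne.symm hjk)))
  have hout : ¬ arc (k + 1, false) := by
    change ¬ (k + 1 - j - 1).val < _
    rw [show k + 1 - j - 1 = k - j by ring]
    exact lt_irrefl _
  exact hout (((this _).trans (this _).symm).mp hin)

theorem rowEdges_agree_iff_at_zero [NeZero n] (hn : 3 ≤ n) (hC : C.IsHamiltonianCycle) (i : ZMod n) :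
    (rowEdge n false i ∈ C.edges ↔ rowEdge n true i ∈ C.edges) ↔
      (rowEdge n false 0 ∈ C.edges ↔ rowEdge n true 0 ∈ C.edges) := by
  refine ZMod.iff_zero_of_forall_add_one_iff
    (fun i => rowEdge n false i ∈ C.edges ↔ rowEdge n true i ∈ C.edges) (fun i => ?_) i
  have hbase := (cycle_edges_at_prism_vertex hn hC.isCycle (hC.mem_support (i + 1, false))).1
  have htop := (cycle_edges_at_prism_vertex hn hC.isCycle (hC.mem_support (i + 1, true))).1
  rw [add_sub_cancel_right] at hbase htop
  tauto

theorem ncard_pillars_of_rowEdges_agree (hn : 3 ≤ n) (hC : C.IsHamiltonianCycle)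
    (hagree : ∀ i, rowEdge n false i ∈ C.edges ↔ rowEdge n true i ∈ C.edges) :
    {i | pillar n i ∈ C.edges}.ncard = 2 := by
  have : Fact (1 < n) := ⟨by omega⟩
  have hpillar i := (cycle_edges_at_prism_vertex hn hC.isCycle (hC.mem_support (i, false))).1
  obtain ⟨j, hj⟩ : ∃ j, rowEdge n false j ∉ C.edges := by
    by_contra! h
    obtain ⟨i, hi⟩ := exists_pillar_mem_edges hC
    exact (hpillar i).mp hi (iff_of_true (h _) (h _))
  have hboth : ∀ m, rowEdge n false m ∉ C.edges → ∀ c, rowEdge n c m ∉ C.edges := by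
    intro m hm c
    cases c
    exacts [hm, (hagree m).not.mp hm]
  have hrow : ∀ m, rowEdge n false m ∈ C.edges ↔ m ≠ j := fun m =>
    ⟨fun hm h => hj (h ▸ hm), fun hmj => by_contra fun hm =>
      hmj (eq_of_rowEdge_not_mem_edges hC (hboth m hm) (hboth j hj))⟩
  have hj1 : j ≠ j + 1 := by simp
  have hpair : {i | pillar n i ∈ C.edges} = {j, j + 1} := Set.ext fun i => by
    rw [Set.mem_ofPred_eq, hpillar, hrow, hrow, Ne, sub_eq_iff_eq_add]
    grind
  rw [hpair, Set.ncard_pair hj1]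

theorem pillar_mem_edges_of_rowEdges_differ (hn : 3 ≤ n) (hC : C.IsHamiltonianCycle)
    (hdiffer : ∀ i, ¬(rowEdge n false i ∈ C.edges ↔ rowEdge n true i ∈ C.edges)) (i : ZMod n) :
    pillar n i ∈ C.edges := by
  have hbase := cycle_edges_at_prism_vertex hn hC.isCycle (hC.mem_support (i, false))
  have htop := cycle_edges_at_prism_vertex hn hC.isCycle (hC.mem_support (i, true))
  have := hdiffer i
  tauto

end HamiltonianCycle

/-- In the prism `C_n □ K_2` (`n ≥ 3`), every hamiltonian cycle contains
either exactly `2` pillar edges or all `n` pillar edges. -/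
theorem stmt0 (n : ℕ) (hn : 3 ≤ n) {v : PV n} (C : (prismG n).Walk v v)
    (hC : C.IsHamiltonianCycle) :
    {i : ZMod n | pillar n i ∈ C.edges}.ncard = 2 ∨
    {i : ZMod n | pillar n i ∈ C.edges}.ncard = n := by
  have : NeZero n := ⟨by omega⟩
  by_cases h0 : rowEdge n false 0 ∈ C.edges ↔ rowEdge n true 0 ∈ C.edges
  · left
    exact ncard_pillars_of_rowEdges_agree hn hC fun i => (rowEdges_agree_iff_at_zero hn hC i).mpr h0
  · right
    have hall : {i : ZMod n | pillar n i ∈ C.edges} = Set.univ :=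
      Set.eq_univ_of_forall <| pillar_mem_edges_of_rowEdges_differ hn hC
        fun i h => h0 ((rowEdges_agree_iff_at_zero hn hC i).mp h)
    rw [hall, Set.ncard_univ, Nat.card_zmod]
end

section
/- In the prism graph C_n □ K_2 (n ≥ 3), if a hamiltonian cycle contains exactly 2 pillar edges, then these two pillars are consecutive, i.e., they are the pillars s_i t_i and s_{i+1} t_{i+1} of a common quadrangular face for some i ∈ Z_n. -/
open SimpleGraph

/-! In a hamiltonian cycle every vertex has exactly two cycle neighbours. The base vertex `sₘ`
has only the three prism neighbours `tₘ`, `sₘ₊₁`, `sₘ₋₁`, so as soon as one pillar `sₚtₚ` is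
used, one of the base edges at `sₚ` is not, say `sₘsₘ₊₁`. Then `sₘ` and `sₘ₊₁` must both
leave the base cycle through their pillars, and these are the only two pillars. -/

open SimpleGraph

lemma ZMod.natCast_ne_zero_of_lt {n k : ℕ} (hk0 : 0 < k) (hkn : k < n) : (k : ZMod n) ≠ 0 :=
  fun h => absurd (Nat.le_of_dvd hk0 ((ZMod.natCast_eq_zero_iff k n).mp h)) (by omega)

lemma ZMod.add_one_ne_self {n : ℕ} (hn : 2 ≤ n) (m : ZMod n) : m + 1 ≠ m := fun h => by
  refine ZMod.natCast_ne_zero_of_lt (k := 1) one_pos hn ?_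
  simpa using h

lemma ZMod.add_one_ne_sub_one {n : ℕ} (hn : 3 ≤ n) (m : ZMod n) : m + 1 ≠ m - 1 := fun h => by
  refine ZMod.natCast_ne_zero_of_lt (k := 2) two_pos hn ?_
  push_cast
  linear_combination h

lemma Set.mem_of_subset_triple_of_ncard_eq_two {α : Type*} {s : Set α} {a b c : α}
    (hs : s ⊆ {a, b, c}) (h2 : s.ncard = 2) (hbc : b ∉ s ∨ c ∉ s) : a ∈ s := by
  by_contra ha
  obtain ⟨x, hx⟩ : ∃ x, s ⊆ {x} := by
    rcases hbc with hb | hc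
    · refine ⟨c, fun y hy => ?_⟩
      rcases hs hy with rfl | rfl | rfl <;> simp_all
    · refine ⟨b, fun y hy => ?_⟩
      rcases hs hy with rfl | rfl | rfl <;> simp_all
  have := Set.ncard_le_ncard hx (Set.finite_singleton x)
  rw [Set.ncard_singleton] at this
  omega

lemma Set.notMem_or_notMem_of_ncard_eq_two {α : Type*} {s : Set α} {a b c : α}
    (hab : a ≠ b) (hac : a ≠ c) (hbc : b ≠ c) (h2 : s.ncard = 2) (ha : a ∈ s) :
    b ∉ s ∨ c ∉ s := by
  by_contra! hmem
  have h3 : ({a, b, c} : Set α).ncard = 3 := Set.ncard_eq_three.mpr ⟨a, b, c, hab, hac, hbc, rfl⟩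
  have := Set.ncard_le_ncard (Set.insert_subset ha (Set.insert_subset hmem.1
    (Set.singleton_subset_iff.mpr hmem.2))) (Set.finite_of_ncard_ne_zero (by omega))
  omega

lemma prismG_adj_base {n : ℕ} {m : ZMod n} {y : PV n} (h : (prismG n).Adj (m, false) y) :
    y = (m, true) ∨ y = (m + 1, false) ∨ y = (m - 1, false) := by
  obtain ⟨j, b⟩ := y
  simp only [prismG, fromRel_adj, ne_eq, Prod.mk.injEq] at h ⊢
  rcases h with ⟨-, (⟨rfl, hb⟩ | ⟨rfl, rfl⟩) | (⟨rfl, hb⟩ | ⟨rfl, hj⟩)⟩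
  · cases b <;> simp_all
  · simp
  · cases b <;> simp_all
  · simp [hj]

section HamiltonianCycle

variable {n : ℕ} {v : PV n} {C : (prismG n).Walk v v}

lemma neighborSet_toSubgraph_base_subset (m : ZMod n) :
    C.toSubgraph.neighborSet (m, false) ⊆ {(m, true), (m + 1, false), (m - 1, false)} :=
  fun _ hy => prismG_adj_base (C.toSubgraph.adj_sub hy)

lemma pillar_mem_edges_iff (m : ZMod n) :
    pillar n m ∈ C.edges ↔ C.toSubgraph.Adj (m, false) (m, true) :=
  C.mem_edges_toSubgraph.symm

variable (hC : C.IsHamiltonianCycle)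
include hC

lemma ncard_neighborSet_toSubgraph (x : PV n) : (C.toSubgraph.neighborSet x).ncard = 2 :=
  hC.isCycle.ncard_neighborSet_toSubgraph_eq_two (hC.mem_support x)

lemma pillar_mem_edges_of_not_adj_base {m : ZMod n}
    (hm : ¬ C.toSubgraph.Adj (m, false) (m + 1, false)) :
    pillar n m ∈ C.edges ∧ pillar n (m + 1) ∈ C.edges := by
  refine ⟨(pillar_mem_edges_iff m).mpr ?_, (pillar_mem_edges_iff (m + 1)).mpr ?_⟩
  · exact Set.mem_of_subset_triple_of_ncard_eq_two (neighborSet_toSubgraph_base_subset m)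
      (ncard_neighborSet_toSubgraph hC _) (Or.inl hm)
  · refine Set.mem_of_subset_triple_of_ncard_eq_two (neighborSet_toSubgraph_base_subset _)
      (ncard_neighborSet_toSubgraph hC _) (Or.inr ?_)
    rw [add_sub_cancel_right]
    exact fun h => hm (C.toSubgraph.adj_symm h)

lemma exists_not_adj_base_of_pillar_mem_edges (hn : 3 ≤ n) {p : ZMod n}
    (hp : pillar n p ∈ C.edges) : ∃ m : ZMod n, ¬ C.toSubgraph.Adj (m, false) (m + 1, false) := by
  rcases Set.notMem_or_notMem_of_ncard_eq_two (a := ((p, true) : PV n))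
      (b := (p + 1, false)) (c := (p - 1, false)) (by simp) (by simp)
      (by simpa using ZMod.add_one_ne_sub_one hn p) (ncard_neighborSet_toSubgraph hC (p, false))
      ((pillar_mem_edges_iff p).mp hp) with h | h
  · exact ⟨p, h⟩
  · refine ⟨p - 1, fun hadj => h ?_⟩
    rw [sub_add_cancel] at hadj
    exact C.toSubgraph.adj_symm hadj

end HamiltonianCycle

/-- If a hamiltonian cycle of the prism `C_n □ K_2` (`n ≥ 3`) contains
exactly two pillar edges, then they are the pillars `sᵢtᵢ` and `s_{i+1}t_{i+1}` of a common
quadrangular face, for some `i`. -/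
theorem stmt1 (n : ℕ) (hn : 3 ≤ n) {v : PV n} (C : (prismG n).Walk v v)
    (hC : C.IsHamiltonianCycle)
    (h2 : {i : ZMod n | pillar n i ∈ C.edges}.ncard = 2) :
    ∃ i : ZMod n, {j : ZMod n | pillar n j ∈ C.edges} = {i, i + 1} := by
  obtain ⟨p, hp⟩ : {i : ZMod n | pillar n i ∈ C.edges}.Nonempty :=
    Set.nonempty_of_ncard_ne_zero (by omega)
  obtain ⟨m, hm⟩ := exists_not_adj_base_of_pillar_mem_edges hC hn hp
  obtain ⟨hm0, hm1⟩ := pillar_mem_edges_of_not_adj_base hC hm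
  refine ⟨m, (Set.eq_of_subset_of_ncard_le ?_ ?_ (Set.finite_of_ncard_ne_zero (by omega))).symm⟩
  · exact Set.insert_subset hm0 (Set.singleton_subset_iff.mpr hm1)
  · rw [h2, Set.ncard_pair (ZMod.add_one_ne_self (by omega) m).symm]
end

section
/- If n ≥ 4 is even, then the prism graph C_n □ K_2 has exactly two hamiltonian cycles containing all n pillar edges, and both are meandering (no two edges of the top cycle or of the base cycle are adjacent in the cycle). -/
open SimpleGraph

/-!
In a cycle through all pillars every vertex already uses its pillar, so it meets exactly one of
its two ring edges: the base edges used alternate along the base cycle, and so do the top edges.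
The base and top edges at the same position cannot both be used, since the cycle would then close
up on the square `sᵢ sᵢ₊₁ tᵢ₊₁ tᵢ`. Hence the edge set is determined by whether `s₀ s₁` is used,
and no vertex meets two ring edges. For even `n` both patterns occur: they are the zigzag cycles
`s₀ t₀ t₁ s₁ s₂ t₂ …` and `t₀ s₀ s₁ t₁ t₂ s₂ …`, images of the standard cycle of `C_{2n}`.
-/

namespace SimpleGraph.Walk

variable {V : Type*} {G : SimpleGraph V}

theorem IsCycle.eq_or_eq_of_mem_edges {u x y₁ y₂ y₃ : V} {p : G.Walk u u} (hp : p.IsCycle)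
    (h₁ : s(x, y₁) ∈ p.edges) (h₂ : s(x, y₂) ∈ p.edges) (h₁₂ : y₁ ≠ y₂)
    (h₃ : s(x, y₃) ∈ p.edges) : y₃ = y₁ ∨ y₃ = y₂ := by
  have hdeg := hp.ncard_neighborSet_toSubgraph_eq_two (p.fst_mem_support_of_mem_edges h₁)
  have hsub : {y₁, y₂} ⊆ p.toSubgraph.neighborSet x := by
    rintro y (rfl | rfl) <;> exact adj_toSubgraph_iff_mem_edges.mpr ‹_›
  have hpair : p.toSubgraph.neighborSet x = {y₁, y₂} :=
    (Set.eq_of_subset_of_ncard_le hsub (by rw [hdeg, Set.ncard_pair h₁₂])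
      (Set.finite_of_ncard_pos (by omega))).symm
  have h₃' : y₃ ∈ p.toSubgraph.neighborSet x := adj_toSubgraph_iff_mem_edges.mpr h₃
  simpa [hpair] using h₃'

theorem IsCycle.exists_ne_mem_edges {u x : V} {p : G.Walk u u} (hp : p.IsCycle)
    (hx : x ∈ p.support) (y : V) : ∃ z ≠ y, s(x, z) ∈ p.edges := by
  obtain ⟨a, b, hab, hpair⟩ :=
    Set.ncard_eq_two.mp (hp.ncard_neighborSet_toSubgraph_eq_two hx)
  have hmem : ∀ z ∈ ({a, b} : Set V), s(x, z) ∈ p.edges := fun z hz =>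
    adj_toSubgraph_iff_mem_edges.mp (show z ∈ p.toSubgraph.neighborSet x from hpair ▸ hz)
  by_cases hay : a = y
  · exact ⟨b, hay ▸ hab.symm, hmem b (by simp)⟩
  · exact ⟨a, hay, hmem a (by simp)⟩

theorem mem_of_forall_mem_edges {u v : V} (p : G.Walk u v) {S : Set V}
    (hS : ∀ ⦃x y⦄, s(x, y) ∈ p.edges → x ∈ S → y ∈ S) (hu : u ∈ S) : v ∈ S := by
  induction p with
  | nil => exact hu
  | cons h q ih =>
    exact ih (fun x y hxy => hS (by simp [hxy])) (hS (by simp) hu)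

theorem mem_of_mem_support_of_forall_mem_edges [DecidableEq V] {u v x y : V} (p : G.Walk u v)
    {S : Set V} (hS : ∀ ⦃x y⦄, s(x, y) ∈ p.edges → x ∈ S → y ∈ S) (hx : x ∈ p.support)
    (hy : y ∈ p.support) (hxS : x ∈ S) : y ∈ S := by
  refine ((p.takeUntil x hx).reverse.append (p.takeUntil y hy)).mem_of_forall_mem_edges
    (fun a b hab => hS ?_) hxS
  rw [edges_append, edges_reverse, List.mem_append, List.mem_reverse] at hab
  exact hab.elim (fun h => p.edges_takeUntil_subset_edges hx h)
    (fun h => p.edges_takeUntil_subset_edges hy h)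

end SimpleGraph.Walk

namespace SimpleGraph.cycleGraph

theorem isHamiltonianCycle_cycle (m : ℕ) : (cycle m).IsHamiltonianCycle :=
  Walk.isHamiltonianCycle_iff_isCycle_and_length_eq.mpr ⟨isCycle_cycle, by simp⟩

theorem mem_edges_cycle {m k : ℕ} (hk : k + 1 < m + 3) :
    s(⟨k, by omega⟩, ⟨k + 1, hk⟩) ∈ (cycle m).edges := by
  have hadj := (cycle m).toSubgraph_adj_getVert (i := m + 2 - k) (by simp; omega)
  rw [getVert_cycle (by omega), getVert_cycle (by omega)] at hadj
  rw [Sym2.eq_swap]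
  convert Walk.adj_toSubgraph_iff_mem_edges.mp hadj using 3
  all_goals rw [Nat.mod_eq_of_lt (by omega)]; omega

end SimpleGraph.cycleGraph

theorem ZMod.natCast_ne_zero_of_lt_s3 {a n : ℕ} (ha : 0 < a) (han : a < n) : (a : ZMod n) ≠ 0 :=
  fun h => absurd (Nat.le_of_dvd ha ((ZMod.natCast_eq_zero_iff a n).mp h)) (by omega)

section Prism

variable {n : ℕ}

def ringEdge (n : ℕ) (b : Bool) (i : ZMod n) : Sym2 (PV n) := s((i, b), (i + 1, b))

theorem ringEdge_false : ringEdge n false = baseEdge n := rfl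

theorem ringEdge_sub_one (i : ZMod n) (b : Bool) :
    ringEdge n b (i - 1) = s((i, b), (i - 1, b)) := by
  rw [ringEdge, sub_add_cancel, Sym2.eq_swap]

theorem pillar_eq (i : ZMod n) (b : Bool) : pillar n i = s((i, b), (i, !b)) := by
  cases b
  · rfl
  · exact Sym2.eq_swap

theorem pillar_ne_ringEdge (i j : ZMod n) (b : Bool) : pillar n i ≠ ringEdge n b j := by
  cases b <;> simp [pillar, ringEdge]

theorem prismG_adj_mk {i : ZMod n} {b : Bool} {y : PV n} (h : (prismG n).Adj (i, b) y) :
    y = (i, !b) ∨ y = (i + 1, b) ∨ y = (i - 1, b) := by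
  obtain ⟨j, c⟩ := y
  simp only [prismG, fromRel_adj] at h
  cases b <;> cases c <;> grind

theorem prismG_edge_cases {e : Sym2 (PV n)} (he : e ∈ (prismG n).edgeSet) :
    (∃ i, e = pillar n i) ∨ ∃ b i, e = ringEdge n b i := by
  induction e using Sym2.ind with
  | _ x y =>
    obtain ⟨i, b⟩ := x
    rcases prismG_adj_mk he with rfl | rfl | rfl
    · exact .inl ⟨i, (pillar_eq i b).symm⟩
    · exact .inr ⟨b, i, rfl⟩
    · exact .inr ⟨b, i - 1, (ringEdge_sub_one i b).symm⟩

end Prism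

section PillarCycle

variable {n : ℕ} {v : PV n} {C : (prismG n).Walk v v}

theorem ringEdge_mem_edges_iff_sub_one (hn : 3 ≤ n) (hC : C.IsCycle) {i : ZMod n}
    (hpil : pillar n i ∈ C.edges) (b : Bool) :
    ringEdge n b i ∈ C.edges ↔ ringEdge n b (i - 1) ∉ C.edges := by
  rw [pillar_eq i b] at hpil
  rw [ringEdge_sub_one, ringEdge]
  constructor
  · intro hnext hprev
    have h2 : (2 : ZMod n) ≠ 0 := by exact_mod_cast ZMod.natCast_ne_zero_of_lt_s3 (by omega) hn
    have hne : ((i + 1, b) : PV n) ≠ (i - 1, b) := fun h =>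
      h2 (by linear_combination congrArg Prod.fst h)
    rcases hC.eq_or_eq_of_mem_edges hnext hprev hne hpil with h | h <;> simp at h
  · intro hprev
    obtain ⟨z, hz, hzC⟩ := hC.exists_ne_mem_edges (C.fst_mem_support_of_mem_edges hpil) (i, !b)
    rcases prismG_adj_mk (C.edges_subset_edgeSet hzC) with rfl | rfl | rfl
    · exact absurd rfl hz
    · exact hzC
    · exact absurd hzC hprev

theorem ringEdge_natCast_mem_edges_iff (hn : 3 ≤ n) (hC : C.IsCycle)
    (hpil : ∀ i, pillar n i ∈ C.edges) (b : Bool) (k : ℕ) :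
    ringEdge n b k ∈ C.edges ↔ (Even k ↔ ringEdge n b 0 ∈ C.edges) := by
  induction k with
  | zero => simp
  | succ k ih =>
    have hstep := ringEdge_mem_edges_iff_sub_one hn hC (hpil (k + 1 : ℕ)) b
    rw [Nat.cast_succ, add_sub_cancel_right] at hstep
    rw [Nat.cast_succ, hstep, ih, Nat.even_add_one]
    tauto

theorem ringEdge_mem_edges_iff (hn : 3 ≤ n) (hC : C.IsCycle)
    (hpil : ∀ i, pillar n i ∈ C.edges) (b : Bool) (i : ZMod n) :
    ringEdge n b i ∈ C.edges ↔ (Even i.val ↔ ringEdge n b 0 ∈ C.edges) := by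
  have : NeZero n := ⟨by omega⟩
  simpa using ringEdge_natCast_mem_edges_iff hn hC hpil b i.val

theorem ringEdge_true_notMem_edges (hn : 3 ≤ n) (hC : C.IsCycle)
    (hpil : ∀ i, pillar n i ∈ C.edges) {i : ZMod n} (hbase : ringEdge n false i ∈ C.edges) :
    ringEdge n true i ∉ C.edges := by
  intro htop
  have hring : ∀ b, ringEdge n b i ∈ C.edges := by simp [Bool.forall_bool, hbase, htop]
  let S : Set (PV n) := {x | x.1 = i ∨ x.1 = i + 1}
  have hS : ∀ ⦃x y⦄, s(x, y) ∈ C.edges → x ∈ S → y ∈ S := by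
    rintro ⟨j, b⟩ y hxy (hj | hj) <;> dsimp only at hj <;> rw [hj] at hxy
    · rcases hC.eq_or_eq_of_mem_edges ((pillar_eq i b) ▸ hpil i) (hring b) (by simp) hxy
        with rfl | rfl
      · exact .inl rfl
      · exact .inr rfl
    · have hprev : s(((i + 1, b) : PV n), (i, b)) ∈ C.edges := by
        rw [Sym2.eq_swap]; exact hring b
      rcases hC.eq_or_eq_of_mem_edges ((pillar_eq (i + 1) b) ▸ hpil (i + 1)) hprev (by simp)
        hxy with rfl | rfl
      · exact .inr rfl
      · exact .inl rfl
  have hmem : ∀ j, ((j, false) : PV n) ∈ C.support := fun j =>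
    C.fst_mem_support_of_mem_edges (hpil j)
  have hfar : ((i + 2, false) : PV n) ∈ S :=
    C.mem_of_mem_support_of_forall_mem_edges hS (hmem i) (hmem (i + 2)) (.inl rfl)
  have h1 : (1 : ZMod n) ≠ 0 := by exact_mod_cast ZMod.natCast_ne_zero_of_lt_s3 one_pos (by omega)
  have h2 : (2 : ZMod n) ≠ 0 := by exact_mod_cast ZMod.natCast_ne_zero_of_lt_s3 two_pos hn
  rcases hfar with h | h
  · exact h2 (by linear_combination h)
  · exact h1 (by linear_combination h)

theorem ringEdge_true_mem_edges_iff (hn : 3 ≤ n) (hC : C.IsCycle)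
    (hpil : ∀ i, pillar n i ∈ C.edges) (i : ZMod n) :
    ringEdge n true i ∈ C.edges ↔ ringEdge n false i ∉ C.edges := by
  have hzero : ringEdge n true 0 ∈ C.edges ↔ ringEdge n false 0 ∉ C.edges := by
    refine ⟨fun htop hbase => ringEdge_true_notMem_edges hn hC hpil hbase htop, fun hbase => ?_⟩
    by_contra htop
    have hone := fun b => (ringEdge_natCast_mem_edges_iff hn hC hpil b 1).mpr
    simp only [Nat.cast_one, Nat.not_even_one, false_iff] at hone
    exact ringEdge_true_notMem_edges hn hC hpil (hone false hbase) (hone true htop)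
  rw [ringEdge_mem_edges_iff hn hC hpil true, ringEdge_mem_edges_iff hn hC hpil false, hzero]
  tauto

theorem edges_eq_of_baseEdge_zero_mem_iff {v' : PV n} {C' : (prismG n).Walk v' v'} (hn : 3 ≤ n)
    (hC : C.IsCycle) (hpil : ∀ i, pillar n i ∈ C.edges)
    (hC' : C'.IsCycle) (hpil' : ∀ i, pillar n i ∈ C'.edges)
    (h0 : baseEdge n 0 ∈ C.edges ↔ baseEdge n 0 ∈ C'.edges) :
    {e | e ∈ C.edges} = {e | e ∈ C'.edges} := by
  ext e
  by_cases he : e ∈ (prismG n).edgeSet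
  · rcases prismG_edge_cases he with ⟨i, rfl⟩ | ⟨b, i, rfl⟩
    · exact iff_of_true (hpil i) (hpil' i)
    · rw [Set.mem_ofPred_eq, Set.mem_ofPred_eq, ringEdge_mem_edges_iff hn hC hpil,
        ringEdge_mem_edges_iff hn hC' hpil']
      cases b
      · rw [ringEdge_false, h0]
      · rw [ringEdge_true_mem_edges_iff hn hC hpil, ringEdge_true_mem_edges_iff hn hC' hpil',
          ringEdge_false, h0]
  · exact iff_of_false (fun h => he (C.edges_subset_edgeSet h))
      (fun h => he (C'.edges_subset_edgeSet h))

theorem eq_of_mem_ringEdge_of_mem_ringEdge (hC : C.IsCycle) (hpil : ∀ i, pillar n i ∈ C.edges)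
    {b b' : Bool} {i i' : ZMod n} {x : PV n} (he : ringEdge n b i ∈ C.edges)
    (hf : ringEdge n b' i' ∈ C.edges) (hxe : x ∈ ringEdge n b i) (hxf : x ∈ ringEdge n b' i') :
    ringEdge n b i = ringEdge n b' i' := by
  obtain ⟨y, hy⟩ := Sym2.mem_iff_exists.mp hxe
  obtain ⟨z, hz⟩ := Sym2.mem_iff_exists.mp hxf
  rw [hy, hz]
  by_contra hne
  have hpx : s(x, (x.1, !x.2)) ∈ C.edges := pillar_eq x.1 x.2 ▸ hpil x.1
  rcases hC.eq_or_eq_of_mem_edges (hy ▸ he) (hz ▸ hf) (fun h => hne (by rw [h])) hpx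
    with h | h
  · exact pillar_ne_ringEdge x.1 i b (by rw [pillar_eq x.1 x.2, hy, h])
  · exact pillar_ne_ringEdge x.1 i' b' (by rw [pillar_eq x.1 x.2, hz, h])

theorem meandering_of_forall_pillar_mem (hC : C.IsCycle) (hpil : ∀ i, pillar n i ∈ C.edges) :
    Meandering C := by
  rintro e he f hf hef hbt ⟨x, hxe, hxf⟩
  obtain ⟨b, i, b', i', rfl, rfl⟩ : ∃ b i b' i', e = ringEdge n b i ∧ f = ringEdge n b' i' := by
    rcases hbt with ⟨⟨i, rfl⟩, ⟨i', rfl⟩⟩ | ⟨⟨i, rfl⟩, ⟨i', rfl⟩⟩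
    exacts [⟨false, i, false, i', rfl, rfl⟩, ⟨true, i, true, i', rfl, rfl⟩]
  exact hef (eq_of_mem_ringEdge_of_mem_ringEdge hC hpil he hf hxe hxf)

end PillarCycle

section Zigzag

variable {n : ℕ}

theorem prismG_adj_not (i : ZMod n) (b : Bool) : (prismG n).Adj (i, b) (i, !b) := by
  cases b <;> simp [prismG]

theorem prismG_adj_add_one (h1 : (1 : ZMod n) ≠ 0) (i : ZMod n) (b : Bool) :
    (prismG n).Adj (i, b) (i + 1, b) := by
  simp [prismG, h1]

/-- The `k`-th vertex of the walk `s₀ t₀ t₁ s₁ s₂ t₂ t₃ s₃ …`, with base and top swapped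
when `b = true`; it closes up after `2 * n` steps exactly when `n` is even. -/
def zigzag (n : ℕ) (b : Bool) (k : ℕ) : PV n :=
  (((k / 2 : ℕ) : ZMod n), b ^^ decide (k % 4 = 1 ∨ k % 4 = 2))

theorem zigzag_two_mul_add_one (b : Bool) (q : ℕ) :
    zigzag n b (2 * q + 1) = ((zigzag n b (2 * q)).1, !(zigzag n b (2 * q)).2) := by
  have hlayer : ((2 * q + 1) % 4 = 1 ∨ (2 * q + 1) % 4 = 2) ↔
      ¬(2 * q % 4 = 1 ∨ 2 * q % 4 = 2) := by omega
  simp only [zigzag, hlayer, decide_not, Bool.xor_not]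
  rw [show (2 * q + 1) / 2 = 2 * q / 2 by omega]

theorem zigzag_two_mul_add_two (b : Bool) (q : ℕ) :
    zigzag n b (2 * q + 2) = ((zigzag n b (2 * q + 1)).1 + 1, (zigzag n b (2 * q + 1)).2) := by
  have hlayer : ((2 * q + 2) % 4 = 1 ∨ (2 * q + 2) % 4 = 2) ↔
      ((2 * q + 1) % 4 = 1 ∨ (2 * q + 1) % 4 = 2) := by omega
  simp only [zigzag, hlayer]
  rw [show (2 * q + 2) / 2 = (2 * q + 1) / 2 + 1 by omega, Nat.cast_succ]

theorem zigzag_adj_succ (h1 : (1 : ZMod n) ≠ 0) (b : Bool) (k : ℕ) :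
    (prismG n).Adj (zigzag n b k) (zigzag n b (k + 1)) := by
  obtain ⟨q, rfl | rfl⟩ := Nat.even_or_odd' k
  · rw [zigzag_two_mul_add_one]
    exact prismG_adj_not _ _
  · rw [zigzag_two_mul_add_two]
    exact prismG_adj_add_one h1 _ _

theorem zigzag_add_two_mul (heven : Even n) (b : Bool) (k : ℕ) :
    zigzag n b (k + 2 * n) = zigzag n b k := by
  obtain ⟨m, rfl⟩ := heven
  simp only [zigzag]
  rw [show (k + 2 * (m + m)) / 2 = k / 2 + (m + m) by omega,
    show (k + 2 * (m + m)) % 4 = k % 4 by omega, Nat.cast_add, ZMod.natCast_self, add_zero]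

theorem zigzag_inj_of_lt {b : Bool} {k k' : ℕ} (hk : k < 2 * n) (hk' : k' < 2 * n)
    (h : zigzag n b k = zigzag n b k') : k = k' := by
  simp only [zigzag, Prod.mk.injEq, ZMod.natCast_eq_natCast_iff',
    Nat.mod_eq_of_lt (show k / 2 < n by omega), Nat.mod_eq_of_lt (show k' / 2 < n by omega),
    Bool.xor_right_inj, decide_eq_decide] at h
  omega

variable {m : ℕ}

def zigzagHom (hm : m + 3 = 2 * n) (heven : Even n) (b : Bool) :
    cycleGraph (m + 3) →g prismG n where
  toFun k := zigzag n b k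
  map_rel' {u v} huv := by
    have h1 : (1 : ZMod n) ≠ 0 := by exact_mod_cast ZMod.natCast_ne_zero_of_lt_s3 one_pos (by omega)
    have hsucc : ∀ u v : Fin (m + 3), v - u = 1 →
        (prismG n).Adj (zigzag n b u) (zigzag n b v) := by
      intro u v h
      have hv : (v : ℕ) = (u + 1) % (m + 3) := by
        rw [eq_add_of_sub_eq' h, Fin.val_add, Fin.val_one]
      rcases Nat.lt_or_ge (u + 1) (m + 3) with hlt | hge
      · rw [hv, Nat.mod_eq_of_lt hlt]
        exact zigzag_adj_succ h1 b u
      · have hwrap := zigzag_adj_succ h1 b u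
        rwa [show (u : ℕ) + 1 = 0 + 2 * n by omega, zigzag_add_two_mul heven,
          ← show (v : ℕ) = 0 by rw [hv, show (u : ℕ) + 1 = m + 3 by omega, Nat.mod_self]]
          at hwrap
    rcases cycleGraph_adj.mp huv with h | h
    · exact (hsucc v u h).symm
    · exact hsucc u v h

theorem zigzagHom_bijective (hm : m + 3 = 2 * n) (heven : Even n) (b : Bool) :
    Function.Bijective (zigzagHom hm heven b) := by
  have : NeZero n := ⟨by omega⟩
  refine (Fintype.bijective_iff_injective_and_card _).mpr ⟨fun k k' h => ?_, ?_⟩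
  · exact Fin.ext (zigzag_inj_of_lt (by omega) (by omega) h)
  · simp only [Fintype.card_fin, Fintype.card_prod, ZMod.card, Fintype.card_bool]
    omega

def zigzagCycle (hm : m + 3 = 2 * n) (heven : Even n) (b : Bool) :
    (prismG n).Walk (zigzagHom hm heven b 0) (zigzagHom hm heven b 0) :=
  (cycleGraph.cycle m).map (zigzagHom hm heven b)

theorem zigzagCycle_isHamiltonianCycle (hm : m + 3 = 2 * n) (heven : Even n) (b : Bool) :
    (zigzagCycle hm heven b).IsHamiltonianCycle :=
  (cycleGraph.isHamiltonianCycle_cycle m).map (zigzagHom_bijective hm heven b)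

theorem zigzag_mem_edges_zigzagCycle (hm : m + 3 = 2 * n) (heven : Even n) (b : Bool) {k : ℕ}
    (hk : k + 1 < 2 * n) :
    s(zigzag n b k, zigzag n b (k + 1)) ∈ (zigzagCycle hm heven b).edges := by
  rw [zigzagCycle, Walk.edges_map]
  exact List.mem_map_of_mem (cycleGraph.mem_edges_cycle (by omega))

theorem pillar_mem_edges_zigzagCycle (hm : m + 3 = 2 * n) (heven : Even n) (b : Bool)
    (i : ZMod n) : pillar n i ∈ (zigzagCycle hm heven b).edges := by
  have : NeZero n := ⟨by omega⟩
  have h := zigzag_mem_edges_zigzagCycle hm heven b (k := 2 * i.val) (by have := i.val_lt; omega)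
  have hcol : (zigzag n b (2 * i.val)).1 = i := by simp [zigzag]
  rw [zigzag_two_mul_add_one] at h
  rw [← hcol, pillar_eq _ (zigzag n b (2 * i.val)).2]
  exact h

theorem ringEdge_zero_mem_edges_zigzagCycle (hm : m + 3 = 2 * n) (heven : Even n) (b : Bool) :
    ringEdge n (!b) 0 ∈ (zigzagCycle hm heven b).edges := by
  simpa [zigzag, ringEdge] using zigzag_mem_edges_zigzagCycle hm heven b (k := 1) (by omega)

theorem baseEdge_zero_mem_edges_zigzagCycle_iff (hn : 3 ≤ n) (hm : m + 3 = 2 * n)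
    (heven : Even n) (b : Bool) :
    baseEdge n 0 ∈ (zigzagCycle hm heven b).edges ↔ b = true := by
  have h := ringEdge_zero_mem_edges_zigzagCycle hm heven b
  cases b
  · have hZ := zigzagCycle_isHamiltonianCycle hm heven false
    simpa [← ringEdge_false, ringEdge_true_mem_edges_iff hn hZ.isCycle
      (pillar_mem_edges_zigzagCycle hm heven false)] using h
  · simp only [iff_true]
    exact h

end Zigzag

/-- If `n ≥ 4` is even, then the prism `C_n □ K_2` has exactly two
hamiltonian cycles (as edge sets) containing all `n` pillars, and both are meandering. -/
theorem stmt3 (n : ℕ) (hn : 4 ≤ n) (heven : Even n) :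
    ∃ E₁ E₂ : Set (Sym2 (PV n)), E₁ ≠ E₂ ∧
      (∀ E : Set (Sym2 (PV n)),
        (∃ (v : PV n) (C : (prismG n).Walk v v), C.IsHamiltonianCycle ∧
          (∀ i : ZMod n, pillar n i ∈ C.edges) ∧ E = {e | e ∈ C.edges}) →
        E = E₁ ∨ E = E₂) ∧
      (∀ E ∈ ({E₁, E₂} : Set (Set (Sym2 (PV n)))),
        ∃ (v : PV n) (C : (prismG n).Walk v v), C.IsHamiltonianCycle ∧
          (∀ i : ZMod n, pillar n i ∈ C.edges) ∧ Meandering C ∧ E = {e | e ∈ C.edges}) := by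
  have hn3 : 3 ≤ n := by omega
  have hm : 2 * n - 3 + 3 = 2 * n := by omega
  have hZ := zigzagCycle_isHamiltonianCycle hm heven
  have hZpil := pillar_mem_edges_zigzagCycle hm heven
  have hZbase := baseEdge_zero_mem_edges_zigzagCycle_iff hn3 hm heven
  refine ⟨{e | e ∈ (zigzagCycle hm heven false).edges},
    {e | e ∈ (zigzagCycle hm heven true).edges}, fun h => ?_, ?_, ?_⟩
  · exact Bool.false_ne_true <|
      (hZbase false).mp ((Set.ext_iff.mp h _).mpr ((hZbase true).mpr rfl))
  · rintro E ⟨v, C, hC, hpil, rfl⟩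
    by_cases h0 : baseEdge n 0 ∈ C.edges
    · exact .inr <| edges_eq_of_baseEdge_zero_mem_iff hn3 hC.isCycle hpil (hZ true).isCycle
        (hZpil true) (by simp [hZbase, h0])
    · exact .inl <| edges_eq_of_baseEdge_zero_mem_iff hn3 hC.isCycle hpil (hZ false).isCycle
        (hZpil false) (by simp [hZbase, h0])
  · rintro E (rfl | rfl) <;>
      exact ⟨_, _, hZ _, hZpil _, meandering_of_forall_pillar_mem (hZ _).isCycle (hZpil _), rfl⟩
end

section
/- The Tutte Fragment has no hamiltonian path with endpoints a and b. -/
open SimpleGraph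

/-! A path is a walk built by prepending vertices, so the supports of all paths of a given
length ending at a given vertex can be enumerated by repeatedly prepending a fresh neighbour.
Every hamiltonian path from `a` to `b` in the Tutte Fragment is among the 14-edge paths ending
at `b`, and a kernel-checked enumeration shows that none of them starts at `a`. -/

namespace SimpleGraph

variable {n : ℕ} (G : SimpleGraph (Fin n)) [DecidableRel G.Adj]

def consExtensions : List (Fin n) → List (List (Fin n))
  | [] => []
  | w :: l => ((List.finRange n).filter fun u => G.Adj u w ∧ u ∉ w :: l).map (· :: w :: l)

theorem cons_mem_consExtensions {u w : Fin n} {l : List (Fin n)} :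
    u :: w :: l ∈ G.consExtensions (w :: l) ↔ G.Adj u w ∧ u ∉ w :: l := by
  simp [consExtensions]

def pathSupportsTo (v : Fin n) : ℕ → List (List (Fin n))
  | 0 => [[v]]
  | k + 1 => (pathSupportsTo v k).flatMap G.consExtensions

theorem Walk.IsPath.support_mem_pathSupportsTo {u v : Fin n} {p : G.Walk u v}
    (hp : p.IsPath) : p.support ∈ G.pathSupportsTo v p.length := by
  induction p with
  | nil => simp [pathSupportsTo]
  | cons h q ih =>
    rw [Walk.cons_isPath_iff] at hp
    rw [Walk.length_cons, pathSupportsTo, List.mem_flatMap]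
    refine ⟨q.support, ih hp.1, ?_⟩
    rw [Walk.support_cons, ← q.cons_tail_support]
    exact G.cons_mem_consExtensions.2 ⟨h, q.cons_tail_support ▸ hp.2⟩

end SimpleGraph

instance : DecidableRel TF.Adj := inferInstanceAs (DecidableRel (SimpleGraph.fromRel _).Adj)

theorem head?_ne_zero_of_mem_pathSupportsTo_TF :
    ∀ l ∈ TF.pathSupportsTo 1 14, l.head? ≠ some 0 := by
  decide

/-- The Tutte Fragment has no hamiltonian path with endpoints `a` and `b`. -/
theorem stmt6 : ¬ ∃ p : TF.Walk 0 1, p.IsHamiltonian := by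
  rintro ⟨p, hp⟩
  have hmem := hp.isPath.support_mem_pathSupportsTo
  rw [hp.length_eq] at hmem
  exact head?_ne_zero_of_mem_pathSupportsTo_TF _ hmem (by rw [← p.cons_tail_support]; rfl)
end

section
/- The Tutte Fragment has exactly two hamiltonian paths with endpoints a and c, and exactly four hamiltonian paths with endpoints b and c. -/
open SimpleGraph

/-!
A hamiltonian path of a graph on `n` vertices is the same as a path of length `n - 1`. Paths
ending at `c` are enumerated by growing them backwards one new neighbour at a time; the edge
sets of those that start at `a`, respectively `b`, are then counted by kernel evaluation.
-/

namespace SimpleGraph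

variable {V : Type*} [Fintype V] [DecidableEq V] (G : SimpleGraph V) [DecidableRel G.Adj]

/-- Enumerating supports rather than walks keeps the kernel evaluation of this search fast. -/
def pathSupports (t : V) : ℕ → Multiset (List V)
  | 0 => {[t]}
  | n + 1 => (pathSupports t n).bind fun
      | [] => 0
      | w :: l => (Finset.univ.val.filter fun u => G.Adj u w ∧ u ∉ w :: l).map (· :: w :: l)

variable {G}

theorem mem_pathSupports {t : V} {n : ℕ} {l : List V} :
    l ∈ G.pathSupports t n ↔ ∃ u, ∃ p : G.Walk u t, p.IsPath ∧ p.length = n ∧ p.support = l := by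
  induction n generalizing l with
  | zero =>
    constructor
    · intro hl
      exact ⟨t, .nil, .nil, rfl, (Multiset.mem_singleton.mp hl).symm⟩
    · rintro ⟨u, p, -, hp, rfl⟩
      cases p with
      | nil => exact Multiset.mem_singleton_self _
      | cons => simp at hp
  | succ n ih =>
    simp only [pathSupports, Multiset.mem_bind]
    constructor
    · rintro ⟨l', hl', hl⟩
      obtain ⟨w, p, hp, rfl, rfl⟩ := ih.mp hl'
      rw [← p.cons_tail_support] at hl
      obtain ⟨u, hu, rfl⟩ := Multiset.mem_map.mp hl
      obtain ⟨-, hadj, hnot⟩ := Multiset.mem_filter.mp hu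
      rw [p.cons_tail_support] at hnot ⊢
      exact ⟨u, .cons hadj p, hp.cons hnot, rfl, rfl⟩
    · rintro ⟨u, p, hp, hn, rfl⟩
      cases p with
      | nil => simp at hn
      | @cons _ w _ hadj p =>
        rw [Walk.cons_isPath_iff] at hp
        refine ⟨p.support, ih.mpr ⟨w, p, hp.1, by simpa using hn, rfl⟩, ?_⟩
        rw [← p.cons_tail_support]
        refine Multiset.mem_map.mpr ⟨u, Multiset.mem_filter.mpr ⟨Finset.mem_univ _, hadj, ?_⟩, ?_⟩
        · rw [p.cons_tail_support]; exact hp.2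
        · rw [Walk.support_cons, p.cons_tail_support]

variable (G)

def hamiltonianEdgeFinsets (u t : V) : Finset (Finset (Sym2 V)) :=
  (((G.pathSupports t (Fintype.card V - 1)).filter (·.head? = some u)).map
    fun l => (List.zipWith (s(·, ·)) l l.tail).toFinset).toFinset

theorem setOf_hamiltonian_edgeSets_eq (u t : V) :
    {E : Set (Sym2 V) | ∃ p : G.Walk u t, p.IsHamiltonian ∧ E = {e | e ∈ p.edges}} =
      (↑) '' (↑(G.hamiltonianEdgeFinsets u t) : Set (Finset (Sym2 V))) := by
  ext E
  simp only [hamiltonianEdgeFinsets, Set.mem_ofPred_eq, Set.mem_image, Finset.mem_coe,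
    Multiset.mem_toFinset, Multiset.mem_map, Multiset.mem_filter, mem_pathSupports,
    Walk.isHamiltonian_iff_isPath_and_length_eq]
  constructor
  · rintro ⟨p, hp, rfl⟩
    refine ⟨_, ⟨p.support, ⟨⟨u, p, hp.1, hp.2, rfl⟩, by rw [← p.cons_tail_support]; rfl⟩, rfl⟩, ?_⟩
    ext e
    simp [Walk.edges_eq_zipWith_support]
  · rintro ⟨_, ⟨_, ⟨⟨w, p, hp, hn, rfl⟩, hu⟩, rfl⟩, rfl⟩
    rw [← p.cons_tail_support, List.head?_cons, Option.some.injEq] at hu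
    subst hu
    refine ⟨p, ⟨hp, hn⟩, ?_⟩
    ext e
    simp [Walk.edges_eq_zipWith_support]

theorem ncard_setOf_hamiltonian_edgeSets (u t : V) :
    {E : Set (Sym2 V) | ∃ p : G.Walk u t, p.IsHamiltonian ∧ E = {e | e ∈ p.edges}}.ncard =
      (G.hamiltonianEdgeFinsets u t).card := by
  rw [setOf_hamiltonian_edgeSets_eq, Set.ncard_image_of_injective _ Finset.coe_injective,
    Set.ncard_coe_finset]

end SimpleGraph

instance inst_s7 : DecidableRel TF.Adj :=
  inferInstanceAs (DecidableRel (SimpleGraph.fromRel fun x y => (x, y) ∈ TFedges).Adj)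

/-- The Tutte Fragment has exactly two hamiltonian paths with endpoints
`a` and `c`, and exactly four with endpoints `b` and `c` (counted as edge sets, i.e. up to
reversal). -/
theorem stmt7 :
    {E : Set (Sym2 (Fin 15)) |
        ∃ p : TF.Walk 0 2, p.IsHamiltonian ∧ E = {e | e ∈ p.edges}}.ncard = 2 ∧
    {E : Set (Sym2 (Fin 15)) |
        ∃ p : TF.Walk 1 2, p.IsHamiltonian ∧ E = {e | e ∈ p.edges}}.ncard = 4 := by
  rw [ncard_setOf_hamiltonian_edgeSets, ncard_setOf_hamiltonian_edgeSets]
  decide +kernel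
end

section
/- If n ≥ 3 is odd, then the prism C_n □ K_2 has no meandering hamiltonian cycle, i.e., every hamiltonian cycle contains two adjacent edges both lying on the top cycle or both on the base cycle. -/
open SimpleGraph

/-! In a meandering hamiltonian cycle no vertex can be entered and left along its own cycle of
the prism, so every vertex uses its pillar and the cycle contains all `n` pillars. The pillars
are exactly the edges joining the base to the top, and a closed walk switches between the two
an even number of times; hence `n` is even. -/

namespace SimpleGraph

variable {V : Type*} {G : SimpleGraph V}

lemma Walk.IsCycle.exists_ne_mem_edges_s19 {u v : V} {p : G.Walk u u} (hp : p.IsCycle)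
    (hv : v ∈ p.support) : ∃ w₁ w₂, w₁ ≠ w₂ ∧ s(v, w₁) ∈ p.edges ∧ s(v, w₂) ∈ p.edges := by
  obtain ⟨w₁, w₂, hne, hnbr⟩ :=
    Set.ncard_eq_two.mp (hp.ncard_neighborSet_toSubgraph_eq_two hv)
  have hw₁ : w₁ ∈ p.toSubgraph.neighborSet v := by simp [hnbr]
  have hw₂ : w₂ ∈ p.toSubgraph.neighborSet v := by simp [hnbr]
  exact ⟨w₁, w₂, hne, Walk.adj_toSubgraph_iff_mem_edges.mp hw₁,
    Walk.adj_toSubgraph_iff_mem_edges.mp hw₂⟩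

def crossesCut (f : V → Bool) : Sym2 V → Bool :=
  Sym2.lift ⟨fun a b => xor (f a) (f b), fun a b => Bool.xor_comm (f a) (f b)⟩

@[simp] lemma crossesCut_mk (f : V → Bool) (a b : V) : crossesCut f s(a, b) = xor (f a) (f b) :=
  rfl

lemma Walk.even_countP_crossesCut_iff (f : V → Bool) {u w : V} (p : G.Walk u w) :
    Even (p.edges.countP (crossesCut f)) ↔ f u = f w := by
  induction p with
  | nil => simp
  | @cons u y w _ q ih =>
    rw [edges_cons, List.countP_cons, crossesCut_mk]
    cases hu : f u <;> cases hy : f y <;> cases hw : f w <;> simp_all [Nat.even_add_one]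

end SimpleGraph

lemma prismG_adj_cases_s19 {n : ℕ} {u w : PV n} (h : (prismG n).Adj u w) :
    (u.1 = w.1 ∧ u.2 ≠ w.2) ∨ (u.2 = w.2 ∧ (w.1 = u.1 + 1 ∨ u.1 = w.1 + 1)) := by
  simp only [prismG, fromRel_adj] at h
  obtain ⟨-, (⟨h₁, h₂⟩ | ⟨h₁, h₂⟩) | (⟨h₁, h₂⟩ | ⟨h₁, h₂⟩)⟩ := h
  · exact Or.inl ⟨h₁, h₂⟩
  · exact Or.inr ⟨h₁, Or.inl h₂⟩
  · exact Or.inl ⟨h₁.symm, h₂.symm⟩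
  · exact Or.inr ⟨h₁.symm, Or.inr h₂⟩

lemma pillar_injective (n : ℕ) : Function.Injective (pillar n) := by
  intro i j h
  simp only [pillar, Sym2.eq, Sym2.rel_iff', Prod.mk.injEq, Prod.swap_prod_mk] at h
  tauto

lemma mk_eq_pillar_of_adj {n : ℕ} {u w : PV n} (h : (prismG n).Adj u w) (hs : u.2 ≠ w.2) :
    s(u, w) = pillar n u.1 := by
  obtain ⟨h₁, -⟩ | ⟨h₂, -⟩ := prismG_adj_cases_s19 h
  · obtain ⟨i, b⟩ := u
    obtain ⟨j, c⟩ := w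
    obtain rfl : i = j := h₁
    cases b <;> cases c <;> simp_all [pillar, Sym2.eq_swap]
  · exact absurd h₂ hs

lemma exists_mk_eq_of_adj {n : ℕ} {u w : PV n} (h : (prismG n).Adj u w) (hs : u.2 = w.2) :
    ∃ i, s(u, w) = s(((i, u.2) : PV n), ((i + 1, u.2) : PV n)) := by
  obtain ⟨i, b⟩ := u
  obtain ⟨j, c⟩ := w
  obtain rfl : b = c := hs
  obtain ⟨-, hne⟩ | ⟨-, rfl | rfl⟩ := prismG_adj_cases_s19 h
  · exact absurd rfl hne
  · exact ⟨i, rfl⟩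
  · exact ⟨j, Sym2.eq_swap⟩

lemma isPillar_iff_crossesCut {n : ℕ} {e : Sym2 (PV n)} (he : e ∈ (prismG n).edgeSet) :
    IsPillar e ↔ crossesCut Prod.snd e := by
  induction e using Sym2.ind with
  | _ u w =>
    constructor
    · rintro ⟨i, hi⟩
      simp [hi, pillar]
    · intro hc
      exact ⟨u.1, mk_eq_pillar_of_adj he (by simpa using hc)⟩

lemma isBaseEdge_or_isTopEdge_of_adj {n : ℕ} {u w₁ w₂ : PV n} (h₁ : (prismG n).Adj u w₁)
    (h₂ : (prismG n).Adj u w₂) (hs₁ : u.2 = w₁.2) (hs₂ : u.2 = w₂.2) :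
    (IsBaseEdge s(u, w₁) ∧ IsBaseEdge s(u, w₂)) ∨ (IsTopEdge s(u, w₁) ∧ IsTopEdge s(u, w₂)) := by
  obtain ⟨i₁, e₁⟩ := exists_mk_eq_of_adj h₁ hs₁
  obtain ⟨i₂, e₂⟩ := exists_mk_eq_of_adj h₂ hs₂
  rw [e₁, e₂]
  cases u.2
  · exact Or.inl ⟨⟨i₁, rfl⟩, ⟨i₂, rfl⟩⟩
  · exact Or.inr ⟨⟨i₁, rfl⟩, ⟨i₂, rfl⟩⟩

namespace Meandering

variable {n : ℕ} {v : PV n} {C : (prismG n).Walk v v}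

lemma pillar_mem_edges (hM : Meandering C) (hC : C.IsCycle) {u : PV n} (hu : u ∈ C.support) :
    pillar n u.1 ∈ C.edges := by
  by_contra hp
  obtain ⟨w₁, w₂, hne, he₁, he₂⟩ := hC.exists_ne_mem_edges_s19 hu
  have hadj₁ : (prismG n).Adj u w₁ := C.adj_of_mem_edges he₁
  have hadj₂ : (prismG n).Adj u w₂ := C.adj_of_mem_edges he₂
  have same_layer {w : PV n} (hadj : (prismG n).Adj u w) (he : s(u, w) ∈ C.edges) :
      u.2 = w.2 := by
    by_contra hs
    exact hp (mk_eq_pillar_of_adj hadj hs ▸ he)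
  refine hM _ he₁ _ he₂ (fun h => hne (Sym2.congr_right.mp h))
    (isBaseEdge_or_isTopEdge_of_adj hadj₁ hadj₂ (same_layer hadj₁ he₁) (same_layer hadj₂ he₂))
    ⟨u, by simp, by simp⟩

lemma countP_crossesCut_eq [NeZero n] (hM : Meandering C) (hC : C.IsHamiltonianCycle) :
    C.edges.countP (crossesCut Prod.snd) = n := by
  have hpillars : (C.edges.filter (crossesCut Prod.snd)).toFinset =
      Finset.univ.image (pillar n) := by
    ext e
    simp only [List.mem_toFinset, List.mem_filter, Finset.mem_image, Finset.mem_univ, true_and]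
    constructor
    · rintro ⟨he, hc⟩
      exact ((isPillar_iff_crossesCut (C.edges_subset_edgeSet he)).mpr hc).imp fun _ => Eq.symm
    · rintro ⟨i, rfl⟩
      exact ⟨hM.pillar_mem_edges hC.isCycle (u := (i, false)) (hC.mem_support _),
        by simp [pillar]⟩
  rw [List.countP_eq_length_filter,
    ← List.toFinset_card_of_nodup (hC.isCycle.edges_nodup.filter _), hpillars,
    Finset.card_image_of_injective _ (pillar_injective n), Finset.card_univ, ZMod.card]

end Meandering

theorem stmt19_general (n : ℕ) (hodd : Odd n) {v : PV n}
    (C : (prismG n).Walk v v) (hC : C.IsHamiltonianCycle) :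
    ∃ e ∈ C.edges, ∃ f ∈ C.edges, e ≠ f ∧
      ((IsBaseEdge e ∧ IsBaseEdge f) ∨ (IsTopEdge e ∧ IsTopEdge f)) ∧
      ∃ x, x ∈ e ∧ x ∈ f := by
  have : NeZero n := ⟨hodd.pos.ne'⟩
  by_contra hnot
  have hM : Meandering C := fun e he f hf hef hlayer hx => hnot ⟨e, he, f, hf, hef, hlayer, hx⟩
  have heven := (C.even_countP_crossesCut_iff Prod.snd).mpr rfl
  rw [hM.countP_crossesCut_eq hC] at heven
  exact Nat.not_even_iff_odd.mpr hodd heven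

/-- If `n ≥ 3` is odd, the prism `C_n □ K_2` has no meandering hamiltonian
cycle: every hamiltonian cycle contains two adjacent edges both lying on the top cycle or
both on the base cycle. -/
theorem stmt19 (n : ℕ) (hn : 3 ≤ n) (hodd : Odd n) {v : PV n}
    (C : (prismG n).Walk v v) (hC : C.IsHamiltonianCycle) :
    ∃ e ∈ C.edges, ∃ f ∈ C.edges, e ≠ f ∧
      ((IsBaseEdge e ∧ IsBaseEdge f) ∨ (IsTopEdge e ∧ IsTopEdge f)) ∧
      ∃ x, x ∈ e ∧ x ∈ f :=
  stmt19_general n hodd C hC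
end
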